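/- Let (X, δ) be a differential scheme simple with respect to Zariski open immersions with leaf space coequalizer X₁ ⇉ X₀ →^η π₀(X). Let L, L' be invertible sheaves on π₀(X) and α : η*L → η*L' an isomorphism of O_{X₀}-modules such that d₀*α and d₁*α agree (up to the canonical coherence isomorphisms) on X₁. Then there exists a unique isomorphism σ : L → L' with α = η*σ. -/

import Mathlib

/-!
**Statement 9.** Let `(X, δ_X)` be a differential scheme which is simple with respect to
Zariski open immersions, with categorical scheme of leaves given by the coequaliser
`X₁ ⇉ X₀ → π₀(X)` (here `X₁` is the dual-numbers thickening of `X` encoding the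
derivation, with projections `d₀, d₁`).  Then the pushforward along `η : X₀ ⟶ π₀(X)` of
the sheaf of constants of `(𝒪_X, δ_X)` is the structure sheaf of `π₀(X)`:
`η_* Const(𝒪_X, δ_X) = 𝒪_{π₀(X)}`, i.e. for every open `V ⊆ π₀(X)` the canonical map
`Γ(π₀(X), V) → Γ(X, η⁻¹V)` is injective with image the constants.
-/

open CategoryTheory CategoryTheory.Limits AlgebraicGeometry

namespace DGal

/-- A derivation of the structure sheaf of a scheme: an additive Leibniz operator on
sections, compatible with restriction. -/
structure SheafDerivation (X : Scheme.{0}) where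
  d : ∀ U : X.Opens, Γ(X, U) → Γ(X, U)
  map_add : ∀ (U : X.Opens) (a b : Γ(X, U)), d U (a + b) = d U a + d U b
  leibniz : ∀ (U : X.Opens) (a b : Γ(X, U)), d U (a * b) = a * d U b + b * d U a
  compat : ∀ (U V : X.Opens) (h : V ≤ U) (a : Γ(X, U)),
    d V (X.presheaf.map (homOfLE h).op a) = X.presheaf.map (homOfLE h).op (d U a)

variable {X Y X₁ : Scheme.{0}} (η : X ⟶ Y) (d0 d1 : X₁ ⟶ X)
  (hcoeq : d0 ≫ η = d1 ≫ η)

/-- The first leg of the base change of `X₁ ⇉ X₀ → Y` along `q : Q ⟶ Y`. -/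
noncomputable def bcLeg0 {Q : Scheme.{0}} (q : Q ⟶ Y) :
    pullback (d0 ≫ η) q ⟶ pullback η q :=
  pullback.map (d0 ≫ η) q η q d0 (𝟙 Q) (𝟙 Y) (by simp) (by simp)

/-- The second leg of the base change of `X₁ ⇉ X₀ → Y` along `q : Q ⟶ Y`. -/
noncomputable def bcLeg1 {Q : Scheme.{0}} (q : Q ⟶ Y) :
    pullback (d0 ≫ η) q ⟶ pullback η q :=
  pullback.map (d0 ≫ η) q η q d1 (𝟙 Q) (𝟙 Y)
    (by rw [Category.comp_id, hcoeq]) (by simp)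

/-- The base change of the coequaliser diagram `X₁ ⇉ X₀ → Y` along `q : Q ⟶ Y`,
as a cofork with vertex `Q`. -/
noncomputable def bcCofork {Q : Scheme.{0}} (q : Q ⟶ Y) :
    Cofork (bcLeg0 η d0 q) (bcLeg1 η d0 d1 hcoeq q) :=
  Cofork.ofπ (pullback.snd η q) (by
    simp only [bcLeg0, bcLeg1]
    rw [pullback.lift_snd, pullback.lift_snd])


end DGal

open DGal

/-!
Since `Spec ℤ[T]` represents global sections, the global-sections functor turns every
coequaliser of schemes into an equaliser of rings. Applied to the base change
`X₁ ×_Y W ⇉ X ×_Y W → W` of the leaf-space coequaliser along an open `W ⊆ Y`, this says that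
`η^♯ : Γ(Y, W) → Γ(X, η⁻¹W)` is injective with image the sections on which `d₀` and `d₁` agree,
i.e. the δ-constants. The units `a i` describing `α` are constants, and so are their inverses,
so they descend to units `b i` on `V i`; the cocycle relation for `b` follows from the one for `a`
by injectivity of `η^♯`, and injectivity also gives uniqueness.
-/

open AlgebraicGeometry.AffineSpace (toSpecMvPolyIntEquiv toSpecMvPolyIntEquiv_comp)

namespace AlgebraicGeometry.Scheme

universe u

lemma comp_toSpecMvPolyIntEquiv_symm {n : Type u} {X Y : Scheme.{u}} (f : X ⟶ Y)
    (v : n → Γ(Y, ⊤)) :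
    f ≫ (toSpecMvPolyIntEquiv n).symm v = (toSpecMvPolyIntEquiv n).symm (f.appTop ∘ v) :=
  (toSpecMvPolyIntEquiv n).eq_symm_apply.mpr <| funext fun i => by
    rw [toSpecMvPolyIntEquiv_comp, Equiv.apply_symm_apply, Function.comp_apply]

section Coequalizer

variable {P₁ P : Scheme.{u}} {f g : P₁ ⟶ P} {c : Cofork f g}

lemma appTop_π_injective_of_isColimit (hc : IsColimit c) : Function.Injective c.π.appTop := by
  intro s t hst
  have h : (toSpecMvPolyIntEquiv PUnit).symm (fun _ => s) =
      (toSpecMvPolyIntEquiv PUnit).symm (fun _ => t) :=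
    Cofork.IsColimit.hom_ext hc <| by
      simp only [comp_toSpecMvPolyIntEquiv_symm, Function.comp_def, hst]
  simpa using congrFun ((toSpecMvPolyIntEquiv PUnit).symm.injective h) PUnit.unit

lemma exists_appTop_π_eq_of_isColimit (hc : IsColimit c) {s : Γ(P, ⊤)}
    (hs : f.appTop s = g.appTop s) : ∃ t, c.π.appTop t = s := by
  have hfg : f ≫ (toSpecMvPolyIntEquiv PUnit).symm (fun _ => s) =
      g ≫ (toSpecMvPolyIntEquiv PUnit).symm (fun _ => s) := by
    simp only [comp_toSpecMvPolyIntEquiv_symm, Function.comp_def, hs]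
  refine ⟨toSpecMvPolyIntEquiv PUnit (Cofork.IsColimit.desc hc _ hfg) PUnit.unit, ?_⟩
  rw [← toSpecMvPolyIntEquiv_comp, Cofork.IsColimit.π_desc' hc, Equiv.apply_symm_apply]

end Coequalizer

lemma Hom.appLE_top_comp_appTop {X Y Z : Scheme.{u}} (m : Z ⟶ Y) (f : Y ⟶ X) {U : X.Opens}
    (e : ⊤ ≤ f ⁻¹ᵁ U) :
    f.appLE U ⊤ e ≫ m.appTop = (m ≫ f).appLE U ⊤ (fun _ _ => e trivial) := by
  rw [Hom.appTop, ← Hom.appLE_eq_app]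
  exact Hom.appLE_comp_appLE m f U ⊤ _ e le_rfl

lemma Hom.appLE_top_comp_appTop_of_comp_eq {Z Z' P X : Scheme.{u}} {m : Z ⟶ P} {f : P ⟶ X}
    {g : Z ⟶ Z'} {k : Z' ⟶ X} (h : m ≫ f = g ≫ k) {U : X.Opens} (e : ⊤ ≤ f ⁻¹ᵁ U)
    (e' : ⊤ ≤ g ⁻¹ᵁ (k ⁻¹ᵁ U)) :
    f.appLE U ⊤ e ≫ m.appTop = k.app U ≫ g.appLE (k ⁻¹ᵁ U) ⊤ e' := by
  rw [appLE_top_comp_appTop]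
  simp only [h]
  rw [comp_appLE]

lemma Hom.app_map_apply {X Y : Scheme.{u}} (f : X ⟶ Y) {U U' : Y.Opens} (i : U' ⟶ U)
    (x : Γ(Y, U)) :
    f.app U' (Y.presheaf.map i.op x) =
      X.presheaf.map ((TopologicalSpace.Opens.map f.base).map i).op (f.app U x) :=
  ConcreteCategory.congr_hom (f.naturality i.op) x

lemma Opens.ι_appLE_self_top {X : Scheme.{u}} (U : X.Opens) :
    U.ι.appLE U ⊤ U.ι_preimage_self.ge = U.topIso.inv := by
  simp only [Opens.ι_appLE, Opens.topIso_inv]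
  rfl

end AlgebraicGeometry.Scheme

namespace DGal

variable {X Y X₁ : Scheme.{0}} (η : X ⟶ Y) (d0 d1 : X₁ ⟶ X) (hcoeq : d0 ≫ η = d1 ≫ η)
  (W : Y.Opens)

lemma top_le_preimage_pullback_fst : ⊤ ≤ pullback.fst η W.ι ⁻¹ᵁ (η ⁻¹ᵁ W) := by
  rw [← Scheme.Hom.comp_preimage, pullback.condition, Scheme.Hom.comp_preimage,
    W.ι_preimage_self, Scheme.Hom.preimage_top]

lemma bcCofork_π_appTop_topIso_inv (b : Γ(Y, W)) :
    (bcCofork η d0 d1 hcoeq W.ι).π.appTop (W.topIso.inv b) =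
      (pullback.fst η W.ι).appLE (η ⁻¹ᵁ W) ⊤ (top_le_preimage_pullback_fst η W)
        (η.app W b) := by
  have h := Scheme.Hom.appLE_top_comp_appTop (pullback.snd η W.ι) W.ι W.ι_preimage_self.ge
  rw [Scheme.Opens.ι_appLE_self_top] at h
  simp only [← pullback.condition, Scheme.Hom.comp_appLE] at h
  exact ConcreteCategory.congr_hom h b

lemma app_injective_of_isColimit_bcCofork (hW : IsColimit (bcCofork η d0 d1 hcoeq W.ι)) :
    Function.Injective (η.app W) := by
  intro b b' h
  have hπ := bcCofork_π_appTop_topIso_inv η d0 d1 hcoeq W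
  exact (ConcreteCategory.bijective_of_isIso W.topIso.inv).1
    (Scheme.appTop_π_injective_of_isColimit hW (by rw [hπ, hπ, h]))

lemma pullback_fst_appLE_injective :
    Function.Injective ((pullback.fst η W.ι).appLE (η ⁻¹ᵁ W) ⊤
      (top_le_preimage_pullback_fst η W)) := by
  have h := Scheme.Hom.appLE_top_comp_appTop (pullbackRestrictIsoRestrict η W).hom
    (η ⁻¹ᵁ W).ι (η ⁻¹ᵁ W).ι_preimage_self.ge
  simp only [pullbackRestrictIsoRestrict_hom_ι, Scheme.Opens.ι_appLE_self_top] at h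
  have : IsIso (pullbackRestrictIsoRestrict η W).hom.appTop :=
    inferInstanceAs (IsIso (Scheme.Γ.map (pullbackRestrictIsoRestrict η W).hom.op))
  rw [← h]
  exact (ConcreteCategory.bijective_of_isIso _).1

lemma bcLeg0_fst :
    bcLeg0 η d0 W.ι ≫ pullback.fst η W.ι = pullback.fst (d0 ≫ η) W.ι ≫ d0 :=
  pullback.lift_fst _ _ _

lemma bcLeg1_fst :
    bcLeg1 η d0 d1 hcoeq W.ι ≫ pullback.fst η W.ι = pullback.fst (d0 ≫ η) W.ι ≫ d1 :=
  pullback.lift_fst _ _ _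

lemma exists_app_eq_of_isColimit_bcCofork (hW : IsColimit (bcCofork η d0 d1 hcoeq W.ι))
    (hU : d0 ⁻¹ᵁ (η ⁻¹ᵁ W) = d1 ⁻¹ᵁ (η ⁻¹ᵁ W)) (s : Γ(X, η ⁻¹ᵁ W))
    (hs : d0.app (η ⁻¹ᵁ W) s = X₁.presheaf.map (eqToHom hU).op (d1.app (η ⁻¹ᵁ W) s)) :
    ∃ b, η.app W b = s := by
  let r := (pullback.fst η W.ι).appLE (η ⁻¹ᵁ W) ⊤ (top_le_preimage_pullback_fst η W)
  have e0 : ⊤ ≤ pullback.fst (d0 ≫ η) W.ι ⁻¹ᵁ (d0 ⁻¹ᵁ (η ⁻¹ᵁ W)) :=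
    top_le_preimage_pullback_fst (d0 ≫ η) W
  have hlegs : (bcLeg0 η d0 W.ι).appTop (r s) = (bcLeg1 η d0 d1 hcoeq W.ι).appTop (r s) := by
    rw [← CategoryTheory.comp_apply, ← CategoryTheory.comp_apply,
      Scheme.Hom.appLE_top_comp_appTop_of_comp_eq (bcLeg0_fst η d0 W) _ e0,
      Scheme.Hom.appLE_top_comp_appTop_of_comp_eq (bcLeg1_fst η d0 d1 hcoeq W) _ (hU ▸ e0),
      CategoryTheory.comp_apply, CategoryTheory.comp_apply, hs, ← CategoryTheory.comp_apply,
      Scheme.Hom.map_appLE]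
  obtain ⟨u, hu⟩ :
      ∃ u : Γ(W.toScheme, ⊤), (bcCofork η d0 d1 hcoeq W.ι).π.appTop u = r s :=
    Scheme.exists_appTop_π_eq_of_isColimit hW hlegs
  refine ⟨W.topIso.hom u, pullback_fst_appLE_injective η W ?_⟩
  rw [← bcCofork_π_appTop_topIso_inv η d0 d1 hcoeq, Iso.hom_inv_id_apply, hu]

namespace SheafDerivation

variable {X : Scheme.{0}} (δ : SheafDerivation X) (U : X.Opens)

lemma d_one : δ.d U 1 = 0 := by
  have h := δ.leibniz U 1 1
  rw [mul_one, one_mul] at h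
  exact left_eq_add.mp h

lemma d_eq_zero_of_mul_eq_one {u c : Γ(X, U)} (huc : u * c = 1) (hu : δ.d U u = 0) :
    δ.d U c = 0 := by
  have h := δ.leibniz U u c
  rw [huc, d_one, hu, mul_zero, add_zero] at h
  calc δ.d U c = c * (u * δ.d U c) := by rw [← mul_assoc, mul_comm c u, huc, one_mul]
    _ = 0 := by rw [← h, mul_zero]

end SheafDerivation

end DGal

/-- Let `(X, δ)` be a differential scheme, simple with respect to
Zariski open immersions, with leaf space coequaliser `X₁ ⇉ X₀ →η π₀(X) = Y`.  Let `L, L'`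
be invertible sheaves on `Y`, presented by transition functions `g, g'` on a common open
cover `V : ι → Y.Opens`, and let `α : η^*L ≅ η^*L'` be an isomorphism of `𝒪_X`-modules,
presented by units `a i` on `η⁻¹(V i)` compatible with the transition functions, such that
`d₀^*α = d₁^*α` (equivalently, `δ(a i) = 0` for all `i`).  Then `α` descends uniquely: there
is a unique isomorphism `σ : L ≅ L'`, given by sections `b i` on `V i` compatible with the
transition functions, with `α = η^*σ`. -/
theorem stmt_10
    (X Y X₁ : Scheme.{0}) (η : X ⟶ Y) (δ : SheafDerivation X)
    (d0 d1 : X₁ ⟶ X)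
    (hpre : ∀ U : X.Opens, d0 ⁻¹ᵁ U = d1 ⁻¹ᵁ U)
    (hδ : ∀ (U : X.Opens) (a : Γ(X, U)),
      d0.app U a = X₁.presheaf.map (eqToHom (hpre U)).op (d1.app U a) ↔ δ.d U a = 0)
    (hcoeq : d0 ≫ η = d1 ≫ η)
    (hsimple : ∀ V : Y.Opens,
      Nonempty (IsColimit (bcCofork η d0 d1 hcoeq V.ι)))
    -- an open cover of `Y`
    (ι : Type) (V : ι → Y.Opens)
    -- the invertible sheaves `L` and `L'`, given by transition functions on the cover
    (g g' : ∀ i j : ι, Γ(Y, V i ⊓ V j))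
    -- the isomorphism `α : η^*L ≅ η^*L'`, given by units on the pulled-back cover
    (a : ∀ i : ι, Γ(X, η ⁻¹ᵁ (V i)))
    (ha : ∀ i, IsUnit (a i))
    (hacomp : ∀ i j : ι,
      X.presheaf.map ((TopologicalSpace.Opens.map η.base).map (homOfLE (inf_le_left : V i ⊓ V j ≤ V i))).op (a i)
          * η.app (V i ⊓ V j) (g' i j)
        = η.app (V i ⊓ V j) (g i j)
          * X.presheaf.map ((TopologicalSpace.Opens.map η.base).map (homOfLE (inf_le_right : V i ⊓ V j ≤ V j))).op (a j))
    -- `d₀^*α` and `d₁^*α` agree, i.e. the defining sections are constants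
    (hconst : ∀ i, δ.d (η ⁻¹ᵁ (V i)) (a i) = 0) :
    ∃! b : ∀ i : ι, Γ(Y, V i),
      (∀ i, IsUnit (b i)) ∧
      (∀ i, η.app (V i) (b i) = a i) ∧
      (∀ i j : ι,
        Y.presheaf.map (homOfLE (inf_le_left : V i ⊓ V j ≤ V i)).op (b i) * g' i j
          = g i j * Y.presheaf.map (homOfLE (inf_le_right : V i ⊓ V j ≤ V j)).op (b j)) := by
  have injective (W : Y.Opens) : Function.Injective (η.app W) :=
    app_injective_of_isColimit_bcCofork η d0 d1 hcoeq W (hsimple W).some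
  have descend (W : Y.Opens) (s : Γ(X, η ⁻¹ᵁ W)) (hs : δ.d _ s = 0) : ∃ b, η.app W b = s :=
    exists_app_eq_of_isColimit_bcCofork η d0 d1 hcoeq W (hsimple W).some (hpre _) s
      ((hδ _ s).2 hs)
  choose b hb using fun i => descend (V i) (a i) (hconst i)
  choose c hc using fun i =>
    descend (V i) _ (δ.d_eq_zero_of_mul_eq_one _ (ha i).mul_val_inv (hconst i))
  refine ⟨b, ⟨fun i => ?_, hb, fun i j => injective _ ?_⟩,
    fun b' hb' => funext fun i => injective _ ((hb'.2.1 i).trans (hb i).symm)⟩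
  · refine IsUnit.of_mul_eq_one (c i) (injective _ ?_)
    rw [map_mul, hb, hc, map_one, IsUnit.mul_val_inv]
  · rw [map_mul, map_mul, Scheme.Hom.app_map_apply, Scheme.Hom.app_map_apply, hb, hb]
    exact hacomp i j
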